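/- arXiv:1112.0104 — 2 statements merged into one kernel-verified Lean document; each statement's English description precedes it below -/
import Mathlib

section
/- Suppose d ≥ 1, ℙ satisfies the 'usual conditions' and 𝔼(Σ_x ω_{0,x}|x|²) < ∞. Assume 𝔼(1/ω_{0,ê}) < ∞ for some ê ∈ {±ê_1,…,±ê_d}. Then χ(ω,nê)/n → 0 as n → ∞, for ℙ-almost every ω. -/
open MeasureTheory Filter Topology Set
open scoped ENNReal NNReal

noncomputable section

namespace RCM

/-- Vertices of the lattice `ℤ^d`. -/
abbrev V (d : ℕ) := Fin d → ℤ

/-- Euclidean norm of a vector in `ℝ^d`. -/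
def rnorm {d : ℕ} (y : Fin d → ℝ) : ℝ := Real.sqrt (∑ i, (y i) ^ 2)

/-- The canonical embedding `ℤ^d → ℝ^d`. -/
def toR {d : ℕ} (x : V d) : Fin d → ℝ := fun i => (x i : ℝ)

/-- Euclidean norm of a lattice vector. -/
def vnorm {d : ℕ} (x : V d) : ℝ := rnorm (toR x)

/-- The `i`-th coordinate unit vector of `ℤ^d`. -/
def unit {d : ℕ} (i : Fin d) : V d := fun j => if j = i then 1 else 0

/-- Nearest-neighbour adjacency on `ℤ^d`. -/
def adj {d : ℕ} (x y : V d) : Prop := (∑ i, |x i - y i|) = 1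

/-- A configuration of conductances on `ℤ^d`: nonnegative, symmetric, with
`π_ω(x) = ∑_y ω_{xy} ∈ (0,∞)` for every `x`. -/
structure Cfg (d : ℕ) where
  w : V d → V d → ℝ
  nonneg : ∀ x y, 0 ≤ w x y
  symm : ∀ x y, w x y = w y x
  summ : ∀ x, Summable fun y => w x y
  pos : ∀ x, 0 < ∑' y, w x y

variable {d : ℕ}

/-- The product σ-algebra on the space of conductance configurations. -/
instance : MeasurableSpace (Cfg d) := MeasurableSpace.comap Cfg.w inferInstance

/-- `π_ω(x) := ∑_y ω_{xy}`. -/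
def piC (ω : Cfg d) (x : V d) : ℝ := ∑' y, ω.w x y

/-- The one-step transition probabilities `P_ω(x,y) = ω_{xy}/π_ω(x)` of the random walk
among the conductances `ω`. -/
def step (ω : Cfg d) (x y : V d) : ℝ := ω.w x y / piC ω x

/-- `n`-step transition probabilities `P_ω^n(x,y)`. -/
def Pn (ω : Cfg d) : ℕ → V d → V d → ℝ
  | 0, x, y => if x = y then 1 else 0
  | n + 1, x, y => ∑' z, Pn ω n x z * step ω z y

/-- The shift `τ_z` acting on configurations: `(τ_zω)_{xy} = ω_{x+z,y+z}`. -/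
def shiftC (z : V d) (ω : Cfg d) : Cfg d where
  w x y := ω.w (x + z) (y + z)
  nonneg x y := ω.nonneg _ _
  symm x y := ω.symm _ _
  summ x := by
    have h := (Equiv.addRight z).summable_iff (f := fun y => ω.w (x + z) y)
    exact h.mpr (ω.summ (x + z))
  pos x := by
    have h := (Equiv.addRight z).tsum_eq (f := fun y => ω.w (x + z) y)
    simp only [Equiv.coe_addRight] at h
    calc (0:ℝ) < ∑' y, ω.w (x + z) y := ω.pos (x + z)
    _ = ∑' y, ω.w (x + z) (y + z) := h.symm

/-- The law of the discrete-time random walk among the conductances `ω` started at `x₀`,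
characterized through its cylinder probabilities. -/
def IsPathLaw (ω : Cfg d) (x₀ : V d) (μ : Measure (ℕ → V d)) : Prop :=
  IsProbabilityMeasure μ ∧
  ∀ (n : ℕ) (p : ℕ → V d),
    μ {X | ∀ i ≤ n, X i = p i} =
      ENNReal.ofReal ((if p 0 = x₀ then (1:ℝ) else 0) *
        ∏ i ∈ Finset.range n, step ω (p i) (p (i + 1)))

/-- The measure `ℚ(dω) = Z⁻¹ π_ω(0) ℙ(dω)`. -/
def Qmeas (P : Measure (Cfg d)) : Measure (Cfg d) :=
  (ENNReal.ofReal (∫ ω, piC ω 0 ∂P))⁻¹ •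
    P.withDensity fun ω => ENNReal.ofReal (piC ω 0)

/-- Bounded measurable real functions on the space of environments. -/
def BddMeas (f : Cfg d → ℝ) : Prop := Measurable f ∧ ∃ C, ∀ ω, |f ω| ≤ C

/-- The "usual conditions" on an environment law: a translation-invariant probability
measure with `𝔼 π_ω(0) < ∞`, irreducible, and ergodic with respect to translations. -/
structure UsualConds (P : Measure (Cfg d)) : Prop where
  prob : IsProbabilityMeasure P
  inv : ∀ z : V d, MeasurePreserving (shiftC z) P P
  integ : Integrable (fun ω => piC ω 0) P
  irred : ∀ x : V d, P {ω | ∃ n, 0 < Pn ω n 0 x} = 1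
  erg : ∀ A : Set (Cfg d), MeasurableSet A → (∀ z, shiftC z ⁻¹' A = A) → P A = 0 ∨ P A = 1

/-- The transition kernel `𝒫` of the environment seen from the particle, applied to a
function `g`: `(𝒫 g)(ω) = ∑_x P_ω(0,x) g(τ_x ω)`. -/
def envK (g : Cfg d → ℝ) (ω : Cfg d) : ℝ := ∑' x, step ω 0 x * g (shiftC x ω)

/-- A local function of the environment: a bounded continuous function of finitely many
conductances. -/
def IsLocal (φ : Cfg d → (Fin d → ℝ)) : Prop :=
  (∃ C, ∀ ω, rnorm (φ ω) ≤ C) ∧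
  ∃ (S : Finset (V d × V d)) (g : ((V d × V d) → ℝ) → Fin d → ℝ),
    Continuous g ∧ ∀ ω, φ ω = g fun e => if e ∈ S then ω.w e.1 e.2 else 0

/-- The gradient `∇φ(ω,x) := φ(τ_xω) − φ(ω)` of a function of the environment. -/
def grad (φ : Cfg d → (Fin d → ℝ)) (ω : Cfg d) (x : V d) : Fin d → ℝ :=
  φ (shiftC x ω) - φ ω

/-- The squared `L²`-norm `𝔼(∑_x ω_{0,x} |u(ω,x)|²)` of a vector field. -/
def energy (P : Measure (Cfg d)) (u : Cfg d → V d → Fin d → ℝ) : ℝ≥0∞ :=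
  ∫⁻ ω, ∑' x, ENNReal.ofReal (ω.w 0 x * rnorm (u ω x) ^ 2) ∂P

/-- The Dirichlet functional `φ ↦ 𝔼(∑_x ω_{0,x} |x + ∇_xφ(ω)|²)`. -/
def dirichlet (P : Measure (Cfg d)) (φ : Cfg d → (Fin d → ℝ)) : ℝ≥0∞ :=
  energy P fun ω x => toR x + grad φ ω x

/-- The infimum of the Dirichlet functional over local functions. -/
def dirichletInf (P : Measure (Cfg d)) : ℝ≥0∞ :=
  ⨅ φ : {φ : Cfg d → Fin d → ℝ // IsLocal φ}, dirichlet P φ.1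

/-- `χ` is the corrector for the environment law `P`: a shift-covariant measurable
function which is the `L²`-limit of the gradients of some minimizing sequence of the
Dirichlet functional. -/
def IsCorrector (P : Measure (Cfg d)) (χ : Cfg d → V d → Fin d → ℝ) : Prop :=
  (∀ x, Measurable fun ω => χ ω x) ∧
  (∀ ω, χ ω 0 = 0) ∧
  (∀ ω x z, χ ω (x + z) - χ ω x = χ (shiftC x ω) z) ∧
  ∃ φs : ℕ → Cfg d → Fin d → ℝ,
    (∀ n, IsLocal (φs n)) ∧
    Tendsto (fun n => dirichlet P (φs n)) atTop (𝓝 (dirichletInf P)) ∧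
    Tendsto (fun n => energy P fun ω x => grad (φs n) ω x - χ ω x) atTop (𝓝 0)

/-- The harmonic coordinate `Ψ(ω,x) := x + χ(ω,x)`. -/
def Psi (χ : Cfg d → V d → Fin d → ℝ) (ω : Cfg d) (x : V d) : Fin d → ℝ :=
  toR x + χ ω x

/-- The second-moment condition `𝔼(∑_x ω_{0,x}|x|²) < ∞`. -/
def SecondMoment (P : Measure (Cfg d)) : Prop :=
  ∫⁻ ω, ∑' x, ENNReal.ofReal (ω.w 0 x * vnorm x ^ 2) ∂P < ⊤

/-- The inverse-moment condition `𝔼(1/ω_{0,x}) < ∞`. -/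
def InvMoment (P : Measure (Cfg d)) (x : V d) : Prop :=
  ∫⁻ ω, (ENNReal.ofReal (ω.w 0 x))⁻¹ ∂P < ⊤

end RCM

/-!
Shift covariance makes `χ(ω, nê)` the Birkhoff sum of `χ(·, ê)` along the shift `τ_ê`. The
corrector is the energy limit of gradients of bounded local functions `φ`, and Cauchy–Schwarz
against the weight `ω_{0,ê}` (whose inverse is integrable) turns this into `L¹` convergence of
`χ(·, ê)` to the coboundaries `φ ∘ τ_ê - φ`. Birkhoff sums of a bounded coboundary stay bounded,
and Hopf's maximal ergodic inequality controls the `L¹`-small remainder uniformly in `n`, so the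
Birkhoff averages of `χ(·, ê)` vanish almost surely.
-/

section MaximalErgodic

variable {α : Type*} {T : α → α}

def maxBirkhoffSum (T : α → α) (g : α → ℝ) : ℕ → α → ℝ
  | 0 => fun _ => 0
  | N + 1 => fun x => max (maxBirkhoffSum T g N x) (birkhoffSum T g (N + 1) x)

variable (T) (g : α → ℝ)

lemma maxBirkhoffSum_nonneg (N : ℕ) (x : α) : 0 ≤ maxBirkhoffSum T g N x := by
  induction N with
  | zero => rfl
  | succ N ih => exact ih.trans (le_max_left _ _)

lemma maxBirkhoffSum_mono {N N' : ℕ} (h : N ≤ N') (x : α) :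
    maxBirkhoffSum T g N x ≤ maxBirkhoffSum T g N' x := by
  induction N', h using Nat.le_induction with
  | base => rfl
  | succ N' _ ih => exact ih.trans (le_max_left _ _)

lemma birkhoffSum_le_maxBirkhoffSum {n N : ℕ} (h : n ≤ N) (x : α) :
    birkhoffSum T g n x ≤ maxBirkhoffSum T g N x := by
  cases n with
  | zero => exact maxBirkhoffSum_nonneg T g N x
  | succ n => exact (le_max_right _ _).trans (maxBirkhoffSum_mono T g h x)

lemma maxBirkhoffSum_le_max_zero_add (N : ℕ) (x : α) :
    maxBirkhoffSum T g N x ≤ max 0 (g x + maxBirkhoffSum T g N (T x)) := by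
  induction N with
  | zero => exact le_max_left _ _
  | succ N ih =>
    refine max_le (ih.trans (max_le_max le_rfl ?_)) ?_
    · exact add_le_add_right (maxBirkhoffSum_mono T g N.le_succ (T x)) _
    · rw [birkhoffSum_succ']
      exact (add_le_add_right (birkhoffSum_le_maxBirkhoffSum T g N.le_succ (T x)) _).trans
        (le_max_right _ _)

lemma maxBirkhoffSum_pos_iff (N : ℕ) (x : α) :
    0 < maxBirkhoffSum T g N x ↔ ∃ n, 0 < n ∧ n ≤ N ∧ 0 < birkhoffSum T g n x := by
  induction N with
  | zero => simp [maxBirkhoffSum]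
  | succ N ih =>
    simp only [maxBirkhoffSum, lt_max_iff, ih]
    constructor
    · rintro (⟨n, hn, hnN, h⟩ | h)
      · exact ⟨n, hn, hnN.trans N.le_succ, h⟩
      · exact ⟨N + 1, N.succ_pos, le_rfl, h⟩
    · rintro ⟨n, hn, hnN, h⟩
      rcases hnN.lt_or_eq with hnN | rfl
      · exact Or.inl ⟨n, hn, Nat.lt_succ_iff.mp hnN, h⟩
      · exact Or.inr h

variable {T g} [MeasurableSpace α] {μ : Measure α}

lemma measurable_maxBirkhoffSum (hT : Measurable T) (hg : Measurable g) (N : ℕ) :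
    Measurable (maxBirkhoffSum T g N) := by
  induction N with
  | zero => exact measurable_const
  | succ N ih =>
    exact ih.max (Finset.measurable_sum _ fun k _ => hg.comp (hT.iterate k))

lemma integrable_maxBirkhoffSum (hT : MeasurePreserving T μ μ) (hg : Integrable g μ) (N : ℕ) :
    Integrable (maxBirkhoffSum T g N) μ := by
  induction N with
  | zero => exact integrable_zero α ℝ μ
  | succ N ih =>
    exact ih.sup (integrable_finsetSum _ fun k _ => (hT.iterate k).integrable_comp_of_integrable hg)

/-- Hopf's maximal ergodic lemma. -/
theorem setIntegral_maxBirkhoffSum_pos_nonneg [IsFiniteMeasure μ] (hT : MeasurePreserving T μ μ)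
    (hgm : Measurable g) (hg : Integrable g μ) (N : ℕ) :
    0 ≤ ∫ x in {x | 0 < maxBirkhoffSum T g N x}, g x ∂μ := by
  set M := maxBirkhoffSum T g N
  set A := {x | 0 < M x}
  have hMm : Measurable M := measurable_maxBirkhoffSum hT.measurable hgm N
  have hA : MeasurableSet A := measurableSet_lt measurable_const hMm
  have hM : Integrable M μ := integrable_maxBirkhoffSum hT hg N
  have hMT : Integrable (fun x => M (T x)) μ := hT.integrable_comp_of_integrable hM
  have h_on : ∀ x ∈ A, M x - M (T x) ≤ g x := fun x hx => by
    rcases le_max_iff.mp (maxBirkhoffSum_le_max_zero_add T g N x) with h | h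
    · exact absurd hx h.not_gt
    · linarith
  have h_off : ∀ x ∈ Aᶜ, M x - M (T x) ≤ 0 := fun x hx => by
    have := maxBirkhoffSum_nonneg T g N (T x)
    have : M x ≤ 0 := not_lt.mp hx
    linarith
  have h_total : ∫ x, (M x - M (T x)) ∂μ = 0 := by
    rw [integral_sub hM hMT, ← integral_map hT.aemeasurable hMm.aestronglyMeasurable, hT.map_eq,
      sub_self]
  calc 0 = ∫ x in A, (M x - M (T x)) ∂μ + ∫ x in Aᶜ, (M x - M (T x)) ∂μ := by
        rw [← h_total]; exact (integral_add_compl hA (hM.sub hMT)).symm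
    _ ≤ ∫ x in A, g x ∂μ + 0 :=
        add_le_add (setIntegral_mono_on (hM.sub hMT).integrableOn hg.integrableOn hA h_on)
          (setIntegral_nonpos hA.compl h_off)
    _ = ∫ x in A, g x ∂μ := add_zero _

theorem maximal_ergodic_inequality [IsFiniteMeasure μ] (hT : MeasurePreserving T μ μ)
    {φ : α → ℝ} (hφm : Measurable φ) (hφ : 0 ≤ φ) {c : ℝ} (hc : 0 < c) :
    ENNReal.ofReal c * μ {x | ∃ n, 0 < n ∧ c * n < birkhoffSum T φ n x}
      ≤ ∫⁻ x, ENNReal.ofReal (φ x) ∂μ := by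
  by_cases hfin : ∫⁻ x, ENNReal.ofReal (φ x) ∂μ = ∞
  · exact hfin ▸ le_top
  have hφi : Integrable φ μ :=
    (lintegral_ofReal_ne_top_iff_integrable hφm.aestronglyMeasurable (ae_of_all _ hφ)).mp hfin
  set g : α → ℝ := fun x => φ x - c
  have hS : ∀ n x, birkhoffSum T g n x = birkhoffSum T φ n x - n * c := fun n x => by
    simp [g, birkhoffSum, Finset.sum_sub_distrib]
  have hset : {x | ∃ n, 0 < n ∧ c * n < birkhoffSum T φ n x}
      = ⋃ N, {x | 0 < maxBirkhoffSum T g N x} := by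
    ext x
    simp only [mem_ofPred_eq, mem_iUnion, maxBirkhoffSum_pos_iff, hS]
    constructor
    · rintro ⟨n, hn, h⟩
      exact ⟨n, n, hn, le_rfl, by linarith⟩
    · rintro ⟨-, n, hn, -, h⟩
      exact ⟨n, hn, by linarith⟩
  have hmono : Monotone fun N => {x | 0 < maxBirkhoffSum T g N x} :=
    fun N N' h x hx => hx.trans_le (maxBirkhoffSum_mono T g h x)
  rw [hset, hmono.measure_iUnion, ENNReal.mul_iSup]
  refine iSup_le fun N => ?_
  have hopf := setIntegral_maxBirkhoffSum_pos_nonneg (g := g) hT (hφm.sub measurable_const)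
    (hφi.sub (integrable_const c)) N
  rw [integral_sub hφi.integrableOn (integrable_const c).integrableOn, setIntegral_const,
    smul_eq_mul] at hopf
  rw [← ofReal_integral_eq_lintegral_ofReal hφi (ae_of_all _ hφ), ← ofReal_measureReal,
    ← ENNReal.ofReal_mul hc.le]
  have hle := setIntegral_le_integral (s := {x | 0 < maxBirkhoffSum T g N x}) hφi (ae_of_all _ hφ)
  exact ENNReal.ofReal_le_ofReal (by linarith)

end MaximalErgodic

section Coboundary

variable {α E : Type*} [NormedAddCommGroup E] {T : α → α}

lemma birkhoffSum_coboundary (g : α → E) (n : ℕ) (x : α) :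
    birkhoffSum T (fun y => g (T y) - g y) n x = g (T^[n] x) - g x := by
  simp only [birkhoffSum, ← Function.iterate_succ_apply' T]
  exact Finset.sum_range_sub (fun k => g (T^[k] x)) n

lemma norm_birkhoffSum_le (h : α → E) (n : ℕ) (x : α) :
    ‖birkhoffSum T h n x‖ ≤ birkhoffSum T (fun y => ‖h y‖) n x :=
  norm_sum_le _ _

/-- Birkhoff sums of a bounded coboundary are bounded. -/
lemma exists_lt_birkhoffSum_norm_sub_coboundary {f g : α → E} {K : ℝ} (hK : ∀ x, ‖g x‖ ≤ K)
    {c : ℝ} (hc : 0 < c) {x : α} (hx : ∃ᶠ n in atTop, c * n < ‖birkhoffSum T f n x‖) :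
    ∃ n, 0 < n ∧ c / 2 * n < birkhoffSum T (fun y => ‖f y - (g (T y) - g y)‖) n x := by
  obtain ⟨N, hN⟩ := exists_nat_ge (4 * K / c)
  obtain ⟨n, hNn, hn⟩ := frequently_atTop.mp hx N
  have hdecomp : birkhoffSum T f n x
      = birkhoffSum T (fun y => f y - (g (T y) - g y)) n x + (g (T^[n] x) - g x) := by
    rw [← birkhoffSum_coboundary, ← birkhoffSum_add']
    congr 1
    funext y
    exact (sub_add_cancel _ _).symm
  have hg : ‖g (T^[n] x) - g x‖ ≤ 2 * K :=
    (norm_sub_le _ _).trans (by linarith [hK (T^[n] x), hK x])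
  have hcn : 4 * K ≤ c * n := (div_le_iff₀' hc).mp (hN.trans (Nat.cast_le.mpr hNn))
  refine ⟨n, Nat.pos_of_ne_zero fun h0 => by simp [h0] at hn, ?_⟩
  have htri := norm_add_le (birkhoffSum T (fun y => f y - (g (T y) - g y)) n x) (g (T^[n] x) - g x)
  have hsum := norm_birkhoffSum_le (fun y => f y - (g (T y) - g y)) n x (T := T)
  rw [hdecomp] at hn
  linarith

variable [MeasurableSpace α] {μ : Measure α}

lemma measure_frequently_lt_norm_birkhoffSum_eq_zero [IsFiniteMeasure μ]
    (hT : MeasurePreserving T μ μ) {f : α → E} (hf : StronglyMeasurable f) {g : ℕ → α → E}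
    (hg : ∀ m, StronglyMeasurable (g m)) (hg_bdd : ∀ m, ∃ K, ∀ x, ‖g m x‖ ≤ K)
    (hfg : Tendsto (fun m => eLpNorm (fun x => f x - (g m (T x) - g m x)) 1 μ) atTop (𝓝 0))
    {c : ℝ} (hc : 0 < c) :
    μ {x | ∃ᶠ n in atTop, c * n < ‖birkhoffSum T f n x‖} = 0 := by
  have hbound : ∀ m, ENNReal.ofReal (c / 2) * μ {x | ∃ᶠ n in atTop, c * n < ‖birkhoffSum T f n x‖}
      ≤ eLpNorm (fun x => f x - (g m (T x) - g m x)) 1 μ := fun m => by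
    obtain ⟨K, hK⟩ := hg_bdd m
    have hh : StronglyMeasurable fun x => f x - (g m (T x) - g m x) :=
      hf.sub (((hg m).comp_measurable hT.measurable).sub (hg m))
    calc _ ≤ ENNReal.ofReal (c / 2) * μ {x | ∃ n, 0 < n ∧
            c / 2 * n < birkhoffSum T (fun y => ‖f y - (g m (T y) - g m y)‖) n x} :=
          mul_le_mul_right (measure_mono fun x hx =>
            exists_lt_birkhoffSum_norm_sub_coboundary hK hc hx) _
      _ ≤ ∫⁻ x, ENNReal.ofReal ‖f x - (g m (T x) - g m x)‖ ∂μ :=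
          maximal_ergodic_inequality hT hh.norm.measurable (fun x => norm_nonneg _) (half_pos hc)
      _ = _ := by simp [eLpNorm_one_eq_lintegral_enorm]
  have := ge_of_tendsto' hfg hbound
  exact (mul_eq_zero.mp (nonpos_iff_eq_zero.mp this)).resolve_left
    (ENNReal.ofReal_pos.mpr (half_pos hc)).ne'

theorem ae_tendsto_birkhoffAverage_zero_of_tendsto_coboundary [NormedSpace ℝ E] [IsFiniteMeasure μ]
    (hT : MeasurePreserving T μ μ) {f : α → E} (hf : StronglyMeasurable f) {g : ℕ → α → E}
    (hg : ∀ m, StronglyMeasurable (g m)) (hg_bdd : ∀ m, ∃ K, ∀ x, ‖g m x‖ ≤ K)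
    (hfg : Tendsto (fun m => eLpNorm (fun x => f x - (g m (T x) - g m x)) 1 μ) atTop (𝓝 0)) :
    ∀ᵐ x ∂μ, Tendsto (birkhoffAverage ℝ T f · x) atTop (𝓝 0) := by
  have hgood : ∀ᵐ x ∂μ, ∀ j : ℕ, ∀ᶠ n in atTop,
      ‖birkhoffSum T f n x‖ ≤ ((j : ℝ) + 1)⁻¹ * n := by
    refine ae_all_iff.mpr fun j => ?_
    filter_upwards [measure_eq_zero_iff_ae_notMem.mp
      (measure_frequently_lt_norm_birkhoffSum_eq_zero hT hf hg hg_bdd hfg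
        (c := ((j : ℝ) + 1)⁻¹) (by positivity))] with x hx
    simpa [not_frequently, not_lt] using hx
  filter_upwards [hgood] with x hx
  refine NormedAddGroup.tendsto_nhds_zero.mpr fun ε hε => ?_
  obtain ⟨j, hj⟩ := exists_nat_one_div_lt hε
  filter_upwards [hx j, eventually_gt_atTop 0] with n hn hn0
  rw [birkhoffAverage, norm_smul, norm_inv, Real.norm_natCast]
  calc (n : ℝ)⁻¹ * ‖birkhoffSum T f n x‖ ≤ (n : ℝ)⁻¹ * (((j : ℝ) + 1)⁻¹ * n) := by gcongr
    _ = 1 / ((j : ℝ) + 1) := by field_simp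
    _ < ε := hj

end Coboundary

section WeightedCauchySchwarz

variable {α : Type*} [MeasurableSpace α] {μ : Measure α}

lemma lintegral_ofReal_le_weighted {w r : α → ℝ} (hw : Measurable w) (hr : Measurable r)
    (hw_pos : ∀ᵐ x ∂μ, 0 < w x) :
    ∫⁻ x, ENNReal.ofReal (r x) ∂μ ≤ (∫⁻ x, (ENNReal.ofReal (w x))⁻¹ ∂μ) ^ (1 / 2 : ℝ) *
      (∫⁻ x, ENNReal.ofReal (w x * r x ^ 2) ∂μ) ^ (1 / 2 : ℝ) := by
  set F : α → ℝ≥0∞ := fun x => (ENNReal.ofReal (w x))⁻¹ ^ (1 / 2 : ℝ)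
  set G : α → ℝ≥0∞ := fun x => ENNReal.ofReal (w x * r x ^ 2) ^ (1 / 2 : ℝ)
  have hsq : ∀ a : ℝ≥0∞, (a ^ (1 / 2 : ℝ)) ^ (2 : ℝ) = a := fun a => by
    rw [← ENNReal.rpow_mul]; norm_num
  have hFG : ∀ᵐ x ∂μ, ENNReal.ofReal (r x) ≤ (F * G) x := by
    filter_upwards [hw_pos] with x hx
    rw [Pi.mul_apply, ← ENNReal.mul_rpow_of_nonneg _ _ (by norm_num),
      ENNReal.ofReal_mul hx.le,
      ENNReal.inv_mul_cancel_left (by simpa using hx) ENNReal.ofReal_ne_top,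
      ENNReal.ofReal_rpow_of_nonneg (sq_nonneg _) (by norm_num), ← Real.sqrt_eq_rpow,
      Real.sqrt_sq_eq_abs]
    exact ENNReal.ofReal_le_ofReal (le_abs_self _)
  calc ∫⁻ x, ENNReal.ofReal (r x) ∂μ ≤ ∫⁻ x, (F * G) x ∂μ := lintegral_mono_ae hFG
    _ ≤ (∫⁻ x, F x ^ (2 : ℝ) ∂μ) ^ (1 / 2 : ℝ) * (∫⁻ x, G x ^ (2 : ℝ) ∂μ) ^ (1 / 2 : ℝ) :=
        ENNReal.lintegral_mul_le_Lp_mul_Lq μ .two_two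
          (hw.ennreal_ofReal.inv.pow_const _).aemeasurable
          ((hw.mul (hr.pow_const 2)).ennreal_ofReal.pow_const _).aemeasurable
    _ = _ := by simp only [F, G, hsq]

end WeightedCauchySchwarz

namespace RCM

variable {d : ℕ}

lemma Cfg.ext {ω₁ ω₂ : Cfg d} (h : ω₁.w = ω₂.w) : ω₁ = ω₂ := by
  cases ω₁; cases ω₂; cases h; rfl

lemma shiftC_zero (ω : Cfg d) : shiftC 0 ω = ω :=
  Cfg.ext <| funext₂ fun x y => by simp [shiftC]

lemma shiftC_shiftC (z z' : V d) (ω : Cfg d) : shiftC z (shiftC z' ω) = shiftC (z + z') ω :=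
  Cfg.ext <| funext₂ fun x y => by simp [shiftC, add_assoc]

lemma iterate_shiftC (e : V d) (n : ℕ) (ω : Cfg d) :
    (shiftC e)^[n] ω = shiftC ((n : ℤ) • e) ω := by
  induction n with
  | zero => simp [shiftC_zero]
  | succ n ih => rw [Function.iterate_succ_apply', ih, shiftC_shiftC, add_comm, Nat.cast_succ,
      add_smul, one_smul]

lemma eq_birkhoffSum_of_cocycle {χ : Cfg d → V d → Fin d → ℝ} (h0 : ∀ ω, χ ω 0 = 0)
    (hcov : ∀ ω x z, χ ω (x + z) - χ ω x = χ (shiftC x ω) z) (e : V d) (n : ℕ) (ω : Cfg d) :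
    χ ω ((n : ℤ) • e) = birkhoffSum (shiftC e) (fun ω' => χ ω' e) n ω := by
  induction n with
  | zero => simpa using h0 ω
  | succ n ih =>
    rw [birkhoffSum_succ, ← ih, iterate_shiftC, ← hcov, Nat.cast_succ, add_smul, one_smul,
      add_sub_cancel]

lemma measurable_w_apply (x y : V d) : Measurable fun ω : Cfg d => ω.w x y :=
  (measurable_pi_apply y).comp ((measurable_pi_apply x).comp (comap_measurable Cfg.w))

lemma measurable_shiftC (z : V d) : Measurable (shiftC z : Cfg d → Cfg d) :=
  measurable_comap_iff.mpr <| measurable_pi_lambda _ fun x => measurable_pi_lambda _ fun y =>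
    measurable_w_apply (x + z) (y + z)

lemma norm_le_rnorm (y : Fin d → ℝ) : ‖y‖ ≤ rnorm y :=
  (pi_norm_le_iff_of_nonneg (Real.sqrt_nonneg _)).mpr fun i => by
    rw [Real.norm_eq_abs, ← Real.sqrt_sq_eq_abs]
    exact Real.sqrt_le_sqrt (Finset.single_le_sum (f := fun j => y j ^ 2)
      (fun j _ => sq_nonneg _) (Finset.mem_univ i))

lemma continuous_rnorm : Continuous (rnorm (d := d)) :=
  Real.continuous_sqrt.comp (continuous_finsetSum _ fun i _ => (continuous_apply i).pow 2)

lemma IsLocal.measurable {φ : Cfg d → Fin d → ℝ} (hφ : IsLocal φ) : Measurable φ := by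
  obtain ⟨-, S, g, hg, hφg⟩ := hφ
  rw [funext hφg]
  refine hg.measurable.comp (measurable_pi_lambda _ fun e => ?_)
  split_ifs
  exacts [measurable_w_apply e.1 e.2, measurable_const]

lemma IsLocal.bounded {φ : Cfg d → Fin d → ℝ} (hφ : IsLocal φ) : ∃ C, ∀ ω, ‖φ ω‖ ≤ C := by
  obtain ⟨⟨C, hC⟩, -⟩ := hφ
  exact ⟨C, fun ω => (norm_le_rnorm _).trans (hC ω)⟩

lemma InvMoment.ae_pos {P : Measure (Cfg d)} {x : V d} (h : InvMoment P x) :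
    ∀ᵐ ω ∂P, 0 < ω.w 0 x := by
  filter_upwards [ae_lt_top (measurable_w_apply 0 x).ennreal_ofReal.inv h.ne] with ω hω
  simpa using hω

lemma eLpNorm_sub_grad_le {P : Measure (Cfg d)} {e : V d} (hinv : InvMoment P e)
    {χ : Cfg d → V d → Fin d → ℝ} (hχ : Measurable fun ω => χ ω e)
    {φ : Cfg d → Fin d → ℝ} (hφ : Measurable φ) :
    eLpNorm (fun ω => χ ω e - (φ (shiftC e ω) - φ ω)) 1 P
      ≤ (∫⁻ ω, (ENNReal.ofReal (ω.w 0 e))⁻¹ ∂P) ^ (1 / 2 : ℝ) *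
        energy P (fun ω x => grad φ ω x - χ ω x) ^ (1 / 2 : ℝ) := by
  have hu : Measurable fun ω => grad φ ω e - χ ω e :=
    ((hφ.comp (measurable_shiftC e)).sub hφ).sub hχ
  calc eLpNorm (fun ω => χ ω e - (φ (shiftC e ω) - φ ω)) 1 P
      ≤ ∫⁻ ω, ENNReal.ofReal (rnorm (grad φ ω e - χ ω e)) ∂P := by
        rw [eLpNorm_one_eq_lintegral_enorm]
        refine lintegral_mono fun ω => ?_
        rw [← ofReal_norm, ← norm_neg, neg_sub]
        exact ENNReal.ofReal_le_ofReal (norm_le_rnorm _)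
    _ ≤ _ := lintegral_ofReal_le_weighted (measurable_w_apply 0 e)
        (continuous_rnorm.measurable.comp hu) hinv.ae_pos
    _ ≤ _ := mul_le_mul_right (ENNReal.rpow_le_rpow (lintegral_mono fun ω =>
        ENNReal.le_tsum (f := fun x => ENNReal.ofReal (ω.w 0 x * rnorm (grad φ ω x - χ ω x) ^ 2)) e)
        (by norm_num)) _

lemma tendsto_eLpNorm_sub_grad {P : Measure (Cfg d)} {e : V d} (hinv : InvMoment P e)
    {χ : Cfg d → V d → Fin d → ℝ} (hχ : Measurable fun ω => χ ω e)
    {φs : ℕ → Cfg d → Fin d → ℝ} (hφs : ∀ m, Measurable (φs m))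
    (henergy : Tendsto (fun m => energy P fun ω x => grad (φs m) ω x - χ ω x) atTop (𝓝 0)) :
    Tendsto (fun m => eLpNorm (fun ω => χ ω e - (φs m (shiftC e ω) - φs m ω)) 1 P)
      atTop (𝓝 0) := by
  have hsqrt := ((ENNReal.continuous_rpow_const (y := 1 / 2)).tendsto 0).comp henergy
  rw [Function.comp_def, ENNReal.zero_rpow_of_pos (by norm_num)] at hsqrt
  have hbound := ENNReal.Tendsto.const_mul hsqrt
    (Or.inr (ENNReal.rpow_ne_top_of_nonneg (by norm_num : (0 : ℝ) ≤ 1 / 2) hinv.ne))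
  rw [mul_zero] at hbound
  exact tendsto_of_tendsto_of_tendsto_of_le_of_le tendsto_const_nhds hbound (fun _ => zero_le)
    fun m => eLpNorm_sub_grad_le hinv hχ (hφs m)

theorem statement11_general {d : ℕ} (P : Measure (Cfg d)) (hP : UsualConds P)
    (e : V d)
    (hinvmom : InvMoment P e)
    (χ : Cfg d → V d → Fin d → ℝ) (hχ : IsCorrector P χ) :
    ∀ᵐ ω ∂P,
      Tendsto (fun n : ℕ => (n : ℝ)⁻¹ • χ ω ((n : ℤ) • e)) atTop (𝓝 0) := by
  have := hP.prob
  obtain ⟨hχm, hχ0, hcov, φs, hloc, -, henergy⟩ := hχ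
  filter_upwards [ae_tendsto_birkhoffAverage_zero_of_tendsto_coboundary (hP.inv e)
    (hχm e).stronglyMeasurable (fun m => (hloc m).measurable.stronglyMeasurable)
    (fun m => (hloc m).bounded)
    (tendsto_eLpNorm_sub_grad hinvmom (hχm e) (fun m => (hloc m).measurable) henergy)] with ω hω
  simpa only [birkhoffAverage, eq_birkhoffSum_of_cocycle hχ0 hcov] using hω

/-- (Directional sublinearity of the corrector)
Suppose `d ≥ 1`, `ℙ` satisfies the "usual conditions", `𝔼(∑_x ω_{0,x}|x|²) < ∞`, and
`𝔼(1/ω_{0,ê}) < ∞` for some coordinate direction `ê ∈ {±ê_1,…,±ê_d}`.  Then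
`χ(ω,nê)/n → 0` as `n → ∞`, for `ℙ`-almost every `ω`. -/
theorem statement11 {d : ℕ} (hd : 1 ≤ d) (P : Measure (Cfg d)) (hP : UsualConds P)
    (hmom : SecondMoment P)
    (e : V d) (he : ∃ i : Fin d, e = unit i ∨ e = -unit i)
    (hinvmom : InvMoment P e)
    (χ : Cfg d → V d → Fin d → ℝ) (hχ : IsCorrector P χ) :
    ∀ᵐ ω ∂P,
      Tendsto (fun n : ℕ => (n : ℝ)⁻¹ • χ ω ((n : ℤ) • e)) atTop (𝓝 0) :=
  statement11_general P hP e hinvmom χ hχ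

end RCM
end
end

section
/- Fix a configuration ω of conductances on ℤ^d with π* := sup_x π_ω(x) < ∞, and suppose the random walk (X_n) among conductances ω started at 0 satisfies a central limit theorem with non-degenerate limit: X_n/√n converges in distribution under P_ω^0 to a centered Gaussian vector on ℝ^d with non-degenerate covariance matrix. Then there is a constant c > 0 (depending only on d, the limiting covariance, and π*) such that for all sufficiently large n, P_ω^{2n}(0,0) ≥ c n^{−d/2} π_ω(0). -/
open MeasureTheory Filter Topology Set
open scoped ENNReal NNReal

noncomputable section

namespace RCM

variable {d : ℕ}

/-!
By reversibility, `π(x) P^n(x,0) = π(0) P^n(0,x)`, so Chapman–Kolmogorov gives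
`P^{2n}(0,0) ≥ π(0) ∑_{x ∈ B} P^n(0,x)² / π(x)` for every finite `B ⊆ ℤ^d`, and Cauchy–Schwarz
bounds this from below by `π(0) P^n(0,B)² / (π* |B|)`. Choose `K` with `μG(B(0,K)) > 1/2`; by the
portmanteau theorem the lattice box `B` of half-side `K √n` then has `P^n(0,B) > 1/2` for large `n`,
while `|B| ≤ (2K+1)^d n^{d/2}`.
-/

section Kernel

variable (ω : Cfg d)

lemma piC_pos (x : V d) : 0 < piC ω x := ω.pos x

lemma step_nonneg (x y : V d) : 0 ≤ step ω x y :=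
  div_nonneg (ω.nonneg x y) (piC_pos ω x).le

def stepE (x y : V d) : ℝ≥0∞ := ENNReal.ofReal (step ω x y)

lemma tsum_stepE (x : V d) : ∑' y, stepE ω x y = 1 := by
  simp only [stepE]
  rw [← ENNReal.ofReal_tsum_of_nonneg (step_nonneg ω x) ((ω.summ x).div_const _)]
  simp only [step, tsum_div_const]
  rw [← piC, div_self (piC_pos ω x).ne', ENNReal.ofReal_one]

lemma ofReal_piC_mul_stepE (x y : V d) :
    ENNReal.ofReal (piC ω x) * stepE ω x y = ENNReal.ofReal (ω.w x y) := by
  rw [stepE, ← ENNReal.ofReal_mul (piC_pos ω x).le, step, mul_div_cancel₀ _ (piC_pos ω x).ne']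

/-- `Pn` computed in `ℝ≥0∞`, where series can be rearranged freely. -/
def PnE : ℕ → V d → V d → ℝ≥0∞
  | 0, x, y => if x = y then 1 else 0
  | n + 1, x, y => ∑' z, PnE n x z * stepE ω z y

lemma PnE_succ (n : ℕ) (x y : V d) :
    PnE ω (n + 1) x y = ∑' z, PnE ω n x z * stepE ω z y := rfl

lemma PnE_add (m n : ℕ) (x y : V d) :
    PnE ω (m + n) x y = ∑' z, PnE ω m x z * PnE ω n z y := by
  induction n generalizing y with
  | zero => simp [PnE]
  | succ n ih =>
    simp only [← add_assoc, PnE_succ, ih, ← ENNReal.tsum_mul_right, ← ENNReal.tsum_mul_left,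
      mul_assoc]
    exact ENNReal.tsum_comm

lemma PnE_succ' (n : ℕ) (x y : V d) :
    PnE ω (n + 1) x y = ∑' z, stepE ω x z * PnE ω n z y := by
  rw [add_comm, PnE_add]
  simp [PnE]

lemma PnE_le_one (n : ℕ) (x y : V d) : PnE ω n x y ≤ 1 := by
  induction n generalizing x with
  | zero => simp only [PnE]; split_ifs <;> simp
  | succ n ih =>
    calc PnE ω (n + 1) x y ≤ ∑' z, stepE ω x z * 1 := by
          rw [PnE_succ']; gcongr with z; exact ih z
      _ = 1 := by simp [tsum_stepE]

lemma PnE_ne_top (n : ℕ) (x y : V d) : PnE ω n x y ≠ ⊤ :=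
  ne_top_of_le_ne_top ENNReal.one_ne_top (PnE_le_one ω n x y)

lemma Pn_eq_toReal_PnE (n : ℕ) (x y : V d) : Pn ω n x y = (PnE ω n x y).toReal := by
  induction n generalizing y with
  | zero => simp only [Pn, PnE]; split_ifs <;> simp
  | succ n ih =>
    rw [Pn, PnE, ENNReal.tsum_toReal_eq (f := fun z => PnE ω n x z * stepE ω z y)
      fun z => ENNReal.mul_ne_top (PnE_ne_top ω n x z) ENNReal.ofReal_ne_top]
    simp only [ih, ENNReal.toReal_mul, stepE, ENNReal.toReal_ofReal (step_nonneg ω _ _)]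

lemma ofReal_Pn (n : ℕ) (x y : V d) : ENNReal.ofReal (Pn ω n x y) = PnE ω n x y := by
  rw [Pn_eq_toReal_PnE, ENNReal.ofReal_toReal (PnE_ne_top ω n x y)]

lemma Pn_nonneg (n : ℕ) (x y : V d) : 0 ≤ Pn ω n x y := by
  rw [Pn_eq_toReal_PnE]; exact ENNReal.toReal_nonneg

lemma ofReal_piC_mul_PnE_comm (n : ℕ) (x y : V d) :
    ENNReal.ofReal (piC ω x) * PnE ω n x y = ENNReal.ofReal (piC ω y) * PnE ω n y x := by
  induction n generalizing x y with
  | zero => simp only [PnE]; split_ifs <;> simp_all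
  | succ n ih =>
    rw [PnE_succ, PnE_succ', ← ENNReal.tsum_mul_left, ← ENNReal.tsum_mul_left]
    refine tsum_congr fun z => ?_
    calc ENNReal.ofReal (piC ω x) * (PnE ω n x z * stepE ω z y)
        = (ENNReal.ofReal (piC ω z) * stepE ω z y) * PnE ω n z x := by rw [← mul_assoc, ih]; ring
      _ = (ENNReal.ofReal (piC ω y) * stepE ω y z) * PnE ω n z x := by
        rw [ofReal_piC_mul_stepE, ofReal_piC_mul_stepE, ω.symm]
      _ = _ := mul_assoc _ _ _

lemma piC_mul_Pn_comm (n : ℕ) (x y : V d) :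
    piC ω x * Pn ω n x y = piC ω y * Pn ω n y x := by
  simpa only [ENNReal.toReal_mul, ENNReal.toReal_ofReal (piC_pos ω _).le, ← Pn_eq_toReal_PnE]
    using congrArg ENNReal.toReal (ofReal_piC_mul_PnE_comm ω n x y)

lemma sum_Pn_mul_Pn_le (B : Finset (V d)) (m n : ℕ) (x y : V d) :
    ∑ z ∈ B, Pn ω m x z * Pn ω n z y ≤ Pn ω (m + n) x y := by
  simp only [Pn_eq_toReal_PnE, ← ENNReal.toReal_mul]
  rw [← ENNReal.toReal_sum fun z _ => ENNReal.mul_ne_top (PnE_ne_top ω m x z) (PnE_ne_top ω n z y)]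
  exact ENNReal.toReal_mono (PnE_ne_top ω _ x y)
    ((ENNReal.sum_le_tsum B).trans_eq (PnE_add ω m n x y).symm)

end Kernel

section DiagonalBound

variable (ω : Cfg d) (x₀ : V d)

lemma piC_mul_sum_sq_div_le_Pn_two_mul (B : Finset (V d)) (n : ℕ) :
    piC ω x₀ * ∑ x ∈ B, Pn ω n x₀ x ^ 2 / piC ω x ≤ Pn ω (2 * n) x₀ x₀ :=
  calc piC ω x₀ * ∑ x ∈ B, Pn ω n x₀ x ^ 2 / piC ω x
      = ∑ x ∈ B, Pn ω n x₀ x * Pn ω n x x₀ := by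
        rw [Finset.mul_sum]
        refine Finset.sum_congr rfl fun x _ => ?_
        have hrev := piC_mul_Pn_comm ω n x x₀
        have hx := (piC_pos ω x).ne'
        field_simp
        linear_combination (-Pn ω n x₀ x) * hrev
    _ ≤ Pn ω (2 * n) x₀ x₀ := two_mul n ▸ sum_Pn_mul_Pn_le ω B n n x₀ x₀

lemma piC_mul_sq_sum_div_le_Pn_two_mul (B : Finset (V d)) (n : ℕ) {M : ℝ}
    (hM : ∀ x ∈ B, piC ω x ≤ M) :
    piC ω x₀ * (∑ x ∈ B, Pn ω n x₀ x) ^ 2 / (M * B.card) ≤ Pn ω (2 * n) x₀ x₀ := by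
  rcases B.eq_empty_or_nonempty with rfl | hB
  · simpa using Pn_nonneg ω _ x₀ x₀
  refine le_trans ?_ (piC_mul_sum_sq_div_le_Pn_two_mul ω x₀ B n)
  rw [mul_div_assoc]
  gcongr ?_ * ?_
  · exact (piC_pos ω x₀).le
  calc (∑ x ∈ B, Pn ω n x₀ x) ^ 2 / (M * B.card)
      ≤ (∑ x ∈ B, Pn ω n x₀ x) ^ 2 / ∑ x ∈ B, piC ω x := by
        gcongr
        · exact Finset.sum_pos (fun x _ => piC_pos ω x) hB
        · simpa [mul_comm] using Finset.sum_le_card_nsmul B _ M hM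
    _ ≤ ∑ x ∈ B, Pn ω n x₀ x ^ 2 / piC ω x :=
        Finset.sq_sum_div_le_sum_sq_div B _ fun x _ => piC_pos ω x

end DiagonalBound

def box (r : ℝ) : Finset (V d) := Fintype.piFinset fun _ => Finset.Icc (-⌊r⌋) ⌊r⌋

lemma mem_box_of_norm_le {r : ℝ} {x : V d} (h : ‖toR x‖ ≤ r) : x ∈ box r := by
  simp only [box, Fintype.mem_piFinset, Finset.mem_Icc, neg_le, Int.le_floor]
  intro i
  have hi : |(x i : ℝ)| ≤ r := (norm_le_pi_norm (toR x) i).trans h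
  push_cast
  exact ⟨(neg_le_abs _).trans hi, (le_abs_self _).trans hi⟩

lemma card_box_le {r : ℝ} (hr : 0 ≤ r) : ((box r : Finset (V d)).card : ℝ) ≤ (2 * r + 1) ^ d := by
  have hfl : (0 : ℤ) ≤ ⌊r⌋ := Int.floor_nonneg.2 hr
  rw [box, Fintype.card_piFinset, Finset.prod_const, Int.card_Icc, Finset.card_univ,
    Fintype.card_fin]
  have hcard : ((⌊r⌋ + 1 - -⌊r⌋).toNat : ℝ) = 2 * ⌊r⌋ + 1 := by
    rw [← Int.cast_natCast, Int.toNat_of_nonneg (by omega)]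
    push_cast; ring
  push_cast
  rw [hcard]
  gcongr
  exact Int.floor_le r

lemma card_box_mul_sqrt_le {K : ℝ} (hK : 0 ≤ K) {n : ℕ} (hn : 0 < n) :
    ((box (K * Real.sqrt n) : Finset (V d)).card : ℝ) ≤ (2 * K + 1) ^ d * Real.sqrt n ^ d := by
  have hsqrt : 1 ≤ Real.sqrt n := Real.one_le_sqrt.2 (by exact_mod_cast hn)
  calc _ ≤ (2 * (K * Real.sqrt n) + 1) ^ d := card_box_le (by positivity)
    _ ≤ ((2 * K + 1) * Real.sqrt n) ^ d := by gcongr; nlinarith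
    _ = _ := mul_pow _ _ _

lemma rpow_neg_div_two_eq_inv_sqrt_pow {x : ℝ} (hx : 0 ≤ x) (k : ℕ) :
    x ^ (-(k : ℝ) / 2) = (Real.sqrt x ^ k)⁻¹ := by
  rw [neg_div, Real.rpow_neg hx, Real.sqrt_eq_rpow, ← Real.rpow_natCast, ← Real.rpow_mul hx]
  ring_nf

section PathLaw

variable (ω : Cfg d)

def finPath {n : ℕ} (q : Fin n → V d) (x : V d) : ℕ → V d :=
  fun i => if h : i < n then q ⟨i, h⟩ else x

lemma finPath_snoc {n : ℕ} (q : Fin n → V d) (z x : V d) {i : ℕ} (hi : i ≤ n) :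
    finPath (Fin.snoc q z : Fin (n + 1) → V d) x i = finPath q z i := by
  rcases hi.lt_or_eq with hi | rfl
  · simp [finPath, hi, Nat.lt_succ_of_lt hi, Fin.snoc]
  · simp [finPath, Fin.snoc]

lemma finPath_self {n : ℕ} (q : Fin n → V d) (x : V d) : finPath q x n = x :=
  dif_neg (lt_irrefl n)

def pathWeight (x₀ : V d) (n : ℕ) (p : ℕ → V d) : ℝ≥0∞ :=
  (if p 0 = x₀ then 1 else 0) * ∏ i ∈ Finset.range n, stepE ω (p i) (p (i + 1))

lemma pathWeight_succ (x₀ : V d) (n : ℕ) (p : ℕ → V d) :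
    pathWeight ω x₀ (n + 1) p = pathWeight ω x₀ n p * stepE ω (p n) (p (n + 1)) := by
  rw [pathWeight, pathWeight, Finset.prod_range_succ, mul_assoc]

lemma pathWeight_congr {x₀ : V d} {n : ℕ} {p p' : ℕ → V d} (h : ∀ i ≤ n, p i = p' i) :
    pathWeight ω x₀ n p = pathWeight ω x₀ n p' := by
  rw [pathWeight, pathWeight, h 0 n.zero_le]
  congr 1
  refine Finset.prod_congr rfl fun i hi => ?_
  rw [Finset.mem_range] at hi
  rw [h i hi.le, h (i + 1) hi]

lemma tsum_pathWeight_finPath (x₀ : V d) (n : ℕ) (x : V d) :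
    ∑' q : Fin n → V d, pathWeight ω x₀ n (finPath q x) = PnE ω n x₀ x := by
  induction n generalizing x with
  | zero => simp [pathWeight, finPath, PnE, eq_comm]
  | succ n ih =>
    have hsnoc (z : V d) (q : Fin n → V d) :
        pathWeight ω x₀ (n + 1) (finPath (Fin.snoc q z : Fin (n + 1) → V d) x) =
          pathWeight ω x₀ n (finPath q z) * stepE ω z x := by
      rw [pathWeight_succ, pathWeight_congr ω fun i hi => finPath_snoc q z x hi,
        finPath_snoc q z x le_rfl, finPath_self, finPath_self]
    calc ∑' q : Fin (n + 1) → V d, pathWeight ω x₀ (n + 1) (finPath q x)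
        = ∑' (z : V d) (q : Fin n → V d),
            pathWeight ω x₀ (n + 1) (finPath (Fin.snoc q z : Fin (n + 1) → V d) x) := by
          rw [← (Fin.snocEquiv fun _ => V d).tsum_eq, ENNReal.tsum_prod']
          rfl
      _ = PnE ω (n + 1) x₀ x := by simp only [hsnoc, ENNReal.tsum_mul_right, ih, PnE_succ]

def cylinder (n : ℕ) (p : ℕ → V d) : Set (ℕ → V d) := {X | ∀ i ≤ n, X i = p i}

lemma measurableSet_cylinder (n : ℕ) (p : ℕ → V d) : MeasurableSet (cylinder n p) := by
  simp only [cylinder, Set.ofPred_forall]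
  exact .iInter fun i => .iInter fun _ => measurable_pi_apply i (measurableSet_singleton _)

lemma setOf_eval_eq_iUnion (n : ℕ) (x : V d) :
    {X : ℕ → V d | X n = x} = ⋃ q : Fin n → V d, cylinder n (finPath q x) := by
  ext X
  simp only [cylinder, Set.mem_ofPred_eq, Set.mem_iUnion]
  constructor
  · rintro rfl
    refine ⟨fun i => X i, fun i hi => ?_⟩
    rcases hi.lt_or_eq with hi | rfl <;> simp [finPath, *]
  · rintro ⟨q, hq⟩
    simpa [finPath] using hq n le_rfl

lemma pairwise_disjoint_cylinder_finPath (n : ℕ) (x : V d) :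
    Pairwise (Function.onFun Disjoint fun q : Fin n → V d => cylinder n (finPath q x)) := by
  intro q q' hne
  refine Set.disjoint_left.2 fun X hX hX' => hne (funext fun i => ?_)
  simpa [finPath] using (hX i i.2.le).symm.trans (hX' i i.2.le)

variable {ω}

lemma IsPathLaw.measure_cylinder {x₀ : V d} {μ : Measure (ℕ → V d)} (h : IsPathLaw ω x₀ μ)
    (n : ℕ) (p : ℕ → V d) : μ (cylinder n p) = pathWeight ω x₀ n p := by
  rw [cylinder, h.2, ENNReal.ofReal_mul (by positivity),
    ENNReal.ofReal_prod_of_nonneg fun i _ => step_nonneg ω _ _, pathWeight]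
  congr 1
  split_ifs <;> simp

lemma IsPathLaw.measure_eval_eq {x₀ : V d} {μ : Measure (ℕ → V d)} (h : IsPathLaw ω x₀ μ)
    (n : ℕ) (x : V d) : μ {X | X n = x} = PnE ω n x₀ x := by
  rw [setOf_eval_eq_iUnion, measure_iUnion (pairwise_disjoint_cylinder_finPath n x)
    fun q => measurableSet_cylinder n _]
  simp only [h.measure_cylinder]
  exact tsum_pathWeight_finPath ω x₀ n x

lemma IsPathLaw.measure_eval_mem {x₀ : V d} {μ : Measure (ℕ → V d)} (h : IsPathLaw ω x₀ μ)
    (n : ℕ) (B : Finset (V d)) : μ {X | X n ∈ B} = ENNReal.ofReal (∑ x ∈ B, Pn ω n x₀ x) := by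
  rw [ENNReal.ofReal_sum_of_nonneg fun x _ => Pn_nonneg ω n x₀ x]
  simp only [ofReal_Pn, ← h.measure_eval_eq]
  exact (sum_measure_preimage_singleton B fun x _ =>
    measurable_pi_apply n (measurableSet_singleton x)).symm

end PathLaw

lemma exists_lt_measure_ball {Ω : Type*} [PseudoMetricSpace Ω] [MeasurableSpace Ω]
    (μ : Measure Ω) [IsProbabilityMeasure μ] (x₀ : Ω) {ε : ℝ≥0∞} (hε : ε < 1) :
    ∃ r : ℕ, ε < μ (Metric.ball x₀ r) := by
  have hmono : Monotone fun r : ℕ => Metric.ball x₀ r :=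
    fun a b hab => Metric.ball_subset_ball (by exact_mod_cast hab)
  have hlim := tendsto_measure_iUnion_atTop (μ := μ) hmono
  rw [Metric.iUnion_ball_nat, measure_univ] at hlim
  exact (hlim.eventually (lt_mem_nhds hε)).exists

lemma IsPathLaw.eventually_lt_sum_Pn_box {ω : Cfg d} {x₀ : V d} {μ : Measure (ℕ → V d)}
    (h : IsPathLaw ω x₀ μ) {μG : Measure (Fin d → ℝ)} [IsProbabilityMeasure μG]
    (hCLT : ∀ F : BoundedContinuousFunction (Fin d → ℝ) ℝ,
      Tendsto (fun n : ℕ => ∫ X, F ((Real.sqrt n)⁻¹ • toR (X n)) ∂μ) atTop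
        (𝓝 (∫ y, F y ∂μG)))
    {r ε : ℝ} (hε : ENNReal.ofReal ε < μG (Metric.ball 0 r)) :
    ∀ᶠ n : ℕ in atTop, ε < ∑ x ∈ box (r * Real.sqrt n), Pn ω n x₀ x := by
  have := h.1
  have hmeas (n : ℕ) : Measurable fun X : ℕ → V d => (Real.sqrt n)⁻¹ • toR (X n) :=
    (measurable_of_countable fun x : V d => (Real.sqrt n)⁻¹ • toR x).comp (measurable_pi_apply n)
  let law (n : ℕ) : ProbabilityMeasure (Fin d → ℝ) :=
    ⟨μ.map _, Measure.isProbabilityMeasure_map (hmeas n).aemeasurable⟩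
  have hlim : Tendsto law atTop (𝓝 (⟨μG, ‹_›⟩ : ProbabilityMeasure (Fin d → ℝ))) := by
    refine ProbabilityMeasure.tendsto_iff_forall_integral_tendsto.2 fun F => ?_
    simpa only [law, ProbabilityMeasure.coe_mk,
      integral_map (hmeas _).aemeasurable F.continuous.aestronglyMeasurable] using hCLT F
  have hball := eventually_lt_of_lt_liminf
    (hε.trans_le (ProbabilityMeasure.le_liminf_measure_open_of_tendsto hlim Metric.isOpen_ball))
  filter_upwards [hball, eventually_gt_atTop 0] with n hn hn0
  have hsqrt : 0 < Real.sqrt n := Real.sqrt_pos.2 (by exact_mod_cast hn0)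
  have hsub : (fun X : ℕ → V d => (Real.sqrt n)⁻¹ • toR (X n)) ⁻¹' Metric.ball 0 r ⊆
      {X | X n ∈ box (r * Real.sqrt n)} := by
    intro X hX
    simp only [Set.mem_preimage, mem_ball_zero_iff, norm_smul, norm_inv, Real.norm_eq_abs,
      abs_of_pos hsqrt, inv_mul_lt_iff₀ hsqrt] at hX
    exact mem_box_of_norm_le (by linarith)
  have hmass := hn.trans_le ((Measure.map_apply (hmeas n) Metric.isOpen_ball.measurableSet).le.trans
    (measure_mono hsub))
  rw [h.measure_eval_mem] at hmass
  exact (ENNReal.ofReal_lt_ofReal_iff'.1 hmass).1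

theorem statement15_general {d : ℕ} (pstar : ℝ)
    (μG : Measure (Fin d → ℝ)) (hGprob : IsProbabilityMeasure μG) :
    ∃ c : ℝ, 0 < c ∧
      ∀ (ω : Cfg d) (μpath : Measure (ℕ → V d)),
        IsPathLaw ω 0 μpath →
        (∀ x, piC ω x ≤ pstar) →
        -- the CLT: `X_n/√n` converges in distribution to `μG` under `P_ω^0`:
        (∀ F : BoundedContinuousFunction (Fin d → ℝ) ℝ,
          Tendsto (fun n : ℕ => ∫ X, F ((Real.sqrt n)⁻¹ • toR (X n)) ∂μpath) atTop
            (𝓝 (∫ y, F y ∂μG))) →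
        ∀ᶠ n : ℕ in atTop,
          c * (n : ℝ) ^ (-(d : ℝ) / 2) * piC ω 0 ≤ Pn ω (2 * n) 0 0 := by
  obtain ⟨K, hK⟩ := exists_lt_measure_ball μG 0 (ENNReal.ofReal_lt_one.2 one_half_lt_one)
  set M := max pstar 1
  refine ⟨1 / (4 * M * (2 * K + 1) ^ d), by positivity, fun ω μpath hPL hpi hCLT => ?_⟩
  filter_upwards [hPL.eventually_lt_sum_Pn_box hCLT hK, eventually_gt_atTop 0] with n hmass hn
  set B := box ((K : ℝ) * Real.sqrt n)
  have hB : 0 < (B.card : ℝ) := by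
    obtain ⟨x, hx⟩ := Finset.nonempty_of_sum_ne_zero (by linarith : ∑ x ∈ B, Pn ω n 0 x ≠ 0)
    exact_mod_cast Finset.card_pos.2 ⟨x, hx⟩
  calc 1 / (4 * M * (2 * K + 1) ^ d) * (n : ℝ) ^ (-(d : ℝ) / 2) * piC ω 0
      = piC ω 0 * (1 / 2) ^ 2 / (M * ((2 * K + 1) ^ d * Real.sqrt n ^ d)) := by
        rw [rpow_neg_div_two_eq_inv_sqrt_pow n.cast_nonneg]; field_simp; ring
    _ ≤ piC ω 0 * (∑ x ∈ B, Pn ω n 0 x) ^ 2 / (M * B.card) := by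
        have := (piC_pos ω 0).le
        gcongr
        exact card_box_mul_sqrt_le K.cast_nonneg hn
    _ ≤ Pn ω (2 * n) 0 0 :=
        piC_mul_sq_sum_div_le_Pn_two_mul ω 0 B n fun x _ => (hpi x).trans (le_max_left _ _)

/-- (The CLT implies the diagonal heat-kernel lower bound)
Fix a configuration `ω` with `π* := sup_x π_ω(x) < ∞` and suppose the walk satisfies a
CLT with a non-degenerate centered Gaussian limit on `ℝ^d` (with covariance matrix `C`).
Then there is `c > 0`, depending only on `d`, the limiting covariance and `π*`, such
that `P_ω^{2n}(0,0) ≥ c n^{-d/2} π_ω(0)` for all sufficiently large `n`. -/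
theorem statement15 {d : ℕ} (pstar : ℝ)
    (C : Matrix (Fin d) (Fin d) ℝ) (hC : C.PosDef)
    (μG : Measure (Fin d → ℝ)) (hGprob : IsProbabilityMeasure μG)
    -- `μG` is the centered Gaussian vector with covariance matrix `C`:
    (hGproj : ∀ lam : Fin d → ℝ,
      μG.map (fun y => ∑ i, lam i * y i)
        = ProbabilityTheory.gaussianReal 0 (dotProduct lam (C.mulVec lam)).toNNReal) :
    ∃ c : ℝ, 0 < c ∧
      ∀ (ω : Cfg d) (μpath : Measure (ℕ → V d)),
        IsPathLaw ω 0 μpath →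
        (∀ x, piC ω x ≤ pstar) →
        -- the CLT: `X_n/√n` converges in distribution to `μG` under `P_ω^0`:
        (∀ F : BoundedContinuousFunction (Fin d → ℝ) ℝ,
          Tendsto (fun n : ℕ => ∫ X, F ((Real.sqrt n)⁻¹ • toR (X n)) ∂μpath) atTop
            (𝓝 (∫ y, F y ∂μG))) →
        ∀ᶠ n : ℕ in atTop,
          c * (n : ℝ) ^ (-(d : ℝ) / 2) * piC ω 0 ≤ Pn ω (2 * n) 0 0 :=
  statement15_general pstar μG hGprob

end RCM
end
end
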